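/- arXiv:2101.07079 — 2 statements merged into one kernel-verified Lean document; each statement's English description precedes it below -/
import Mathlib

section
/- Focus-focus wall-crossing claim (Claim 5.10 of the paper, with multiplicity): for every γ ∈ ℤ², every integer d ≥ 1, and every μ ∈ ℤ², one has (𝒦_{−γ,d} ∘ 𝒦_{γ,d})(z^μ) = z^{μ + d⟨μ,γ⟩γ}. In other words, the composite of the two wall-crossing transformations attached to opposite rays with wall function (1+z^{±γ})^d is the monomial automorphism z^μ ↦ z^{M^{−1}μ}, where M is the Picard–Lefschetz transformation M(μ) = μ + d⟨γ,μ⟩γ. -/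
open MvPolynomial

noncomputable section

/-- `K = ℂ(x,y)`, the field of rational functions in two variables over `ℂ`. -/
abbrev K : Type := FractionRing (MvPolynomial (Fin 2) ℂ)

/-- The rational function `x`. -/
noncomputable def xx : K := algebraMap (MvPolynomial (Fin 2) ℂ) K (X 0)

/-- The rational function `y`. -/
noncomputable def yy : K := algebraMap (MvPolynomial (Fin 2) ℂ) K (X 1)

/-- `z^μ = x^m y^n` for `μ = (m,n) ∈ ℤ²`. -/
noncomputable def zmon (μ : ℤ × ℤ) : K := xx ^ μ.1 * yy ^ μ.2

/-- `⟨μ,γ⟩ = m b − n a` for `μ = (m,n)`, `γ = (a,b)`. -/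
def pairing (μ γ : ℤ × ℤ) : ℤ := μ.1 * γ.2 - μ.2 * γ.1

/-- `Φ` is the wall-crossing transformation `𝒦_{γ,d}`: the `ℂ`-algebra automorphism of `K`
satisfying `𝒦_{γ,d}(z^μ) = z^μ (1+z^γ)^{d⟨μ,γ⟩}` for all `μ ∈ ℤ²`. -/
def IsWallCrossing (d : ℤ) (γ : ℤ × ℤ) (Φ : K ≃ₐ[ℂ] K) : Prop :=
  ∀ μ : ℤ × ℤ, Φ (zmon μ) = zmon μ * (1 + zmon γ) ^ (d * pairing μ γ)

lemma amap_inj : Function.Injective (algebraMap (MvPolynomial (Fin 2) ℂ) K) :=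
  IsFractionRing.injective _ _
lemma xx_ne : xx ≠ 0 := by
  simp only [xx, Ne, map_eq_zero_iff _ amap_inj]; exact X_ne_zero 0
lemma yy_ne : yy ≠ 0 := by
  simp only [yy, Ne, map_eq_zero_iff _ amap_inj]; exact X_ne_zero 1
lemma zmon_ne (μ : ℤ × ℤ) : zmon μ ≠ 0 :=
  mul_ne_zero (zpow_ne_zero _ xx_ne) (zpow_ne_zero _ yy_ne)
lemma zmon_add (μ ν : ℤ × ℤ) : zmon (μ + ν) = zmon μ * zmon ν := by
  simp only [zmon, Prod.fst_add, Prod.snd_add, zpow_add₀ xx_ne, zpow_add₀ yy_ne]; ring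
lemma zmon_smul (p : ℤ) (γ : ℤ × ℤ) : zmon (p • γ) = zmon γ ^ p := by
  simp only [zmon, Prod.smul_fst, Prod.smul_snd, smul_eq_mul, mul_comm p, zpow_mul, mul_zpow]
lemma zmon_pow_nat (t : ℤ) (u : K) (hu : u ≠ 0) :
    u ^ t * u ^ ((-t).toNat : ℕ) = u ^ (t.toNat : ℕ) := by
  rw [← zpow_natCast u ((-t).toNat), ← zpow_natCast u t.toNat, ← zpow_add₀ hu]
  congr 1; omega
lemma one_add_zmon_ne (ν : ℤ × ℤ) : 1 + zmon ν ≠ 0 := by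
  intro h
  have hz : zmon ν = -1 := by linear_combination h
  have key : xx ^ (ν.1.toNat : ℕ) * yy ^ (ν.2.toNat : ℕ)
      = -(xx ^ ((-ν.1).toNat : ℕ) * yy ^ ((-ν.2).toNat : ℕ)) := by
    have := congrArg (· * (xx ^ ((-ν.1).toNat : ℕ) * yy ^ ((-ν.2).toNat : ℕ))) hz
    simp only [zmon] at this
    calc xx ^ (ν.1.toNat : ℕ) * yy ^ (ν.2.toNat : ℕ)
        = (xx ^ ν.1 * xx ^ ((-ν.1).toNat : ℕ)) * (yy ^ ν.2 * yy ^ ((-ν.2).toNat : ℕ)) := by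
          rw [zmon_pow_nat _ _ xx_ne, zmon_pow_nat _ _ yy_ne]
      _ = -(xx ^ ((-ν.1).toNat : ℕ) * yy ^ ((-ν.2).toNat : ℕ)) := by
          rw [show (xx ^ ν.1 * xx ^ ((-ν.1).toNat : ℕ)) * (yy ^ ν.2 * yy ^ ((-ν.2).toNat : ℕ))
              = (xx ^ ν.1 * yy ^ ν.2) * (xx ^ ((-ν.1).toNat : ℕ) * yy ^ ((-ν.2).toNat : ℕ)) by ring,
            this]
          ring
  have hpoly : (X 0 ^ ν.1.toNat * X 1 ^ ν.2.toNat
      + X 0 ^ (-ν.1).toNat * X 1 ^ (-ν.2).toNat : MvPolynomial (Fin 2) ℂ) = 0 := by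
    apply amap_inj
    rw [RingHom.map_add, RingHom.map_mul, RingHom.map_mul, RingHom.map_pow, RingHom.map_pow,
      RingHom.map_pow, RingHom.map_pow, RingHom.map_zero]
    change xx ^ _ * yy ^ _ + xx ^ _ * yy ^ _ = 0
    rw [key]; ring
  have := congrArg (aeval (fun _ => (1:ℂ))) hpoly
  simp at this


/-- Focus-focus wall-crossing claim: for every `γ ∈ ℤ²`, integer `d ≥ 1` and `μ ∈ ℤ²`,
`(𝒦_{−γ,d} ∘ 𝒦_{γ,d})(z^μ) = z^{μ + d⟨μ,γ⟩γ}`, i.e. the composite is the monomial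
automorphism `z^μ ↦ z^{M⁻¹μ}` with `M` the Picard–Lefschetz transformation
`M(μ) = μ + d⟨γ,μ⟩γ`. -/
theorem focus_focus_wall_crossing (γ : ℤ × ℤ) (d : ℤ) (hd : 1 ≤ d)
    (Kp Km : K ≃ₐ[ℂ] K)
    (hp : IsWallCrossing d γ Kp) (hm : IsWallCrossing d (-γ) Km) :
    ∀ μ : ℤ × ℤ, Km (Kp (zmon μ)) = zmon (μ + (d * pairing μ γ) • γ) := by
  intro μ
  have h1 : pairing μ (-γ) = -pairing μ γ := by simp [pairing]; ring
  have h2 : pairing γ (-γ) = 0 := by simp [pairing]; ring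
  rw [hp μ, map_mul, hm μ, map_zpow₀, map_add, map_one, hm γ, h2, mul_zero, zpow_zero, mul_one,
    h1, zmon_add, zmon_smul]
  have hkey : (1 : K) + zmon γ = zmon γ * (1 + zmon (-γ)) := by
    have h3 : zmon γ * zmon (-γ) = 1 := by
      rw [← zmon_add]; simp [zmon]
    rw [mul_add, mul_one, h3]; ring
  rw [hkey, mul_zpow]
  have hne := one_add_zmon_ne (-γ)
  calc zmon μ * (1 + zmon (-γ)) ^ (d * -pairing μ γ)
        * ((zmon γ) ^ (d * pairing μ γ) * (1 + zmon (-γ)) ^ (d * pairing μ γ))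
      = zmon μ * (zmon γ) ^ (d * pairing μ γ)
        * ((1 + zmon (-γ)) ^ (d * -pairing μ γ) * (1 + zmon (-γ)) ^ (d * pairing μ γ)) := by ring
    _ = zmon μ * zmon γ ^ (d * pairing μ γ) := by
        rw [← zpow_add₀ hne, show d * -pairing μ γ + d * pairing μ γ = 0 by ring, zpow_zero,
          mul_one]

end
end

section
/- Consistency of the B₂ (canonical) scattering diagram used for the del Pezzo surface of degree 6: as automorphisms of K = ℂ(x,y), 𝒦_{(0,1),2} ∘ 𝒦_{(1,0),1} = 𝒦_{(1,0),1} ∘ 𝒦_{(1,1),2} ∘ 𝒦_{(1,2),1} ∘ 𝒦_{(0,1),2}. -/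
/-!
Both sides are `ℂ`-algebra endomorphisms of `ℂ(x,y)`, so it suffices to compare them on `x` and `y`.
Pushing `x` through the right-hand side gives `x(1+y)² ↦ x(1+y+xy²)² ↦ x(1+y+xy)² ↦ x(1+y)²`,
and pushing `y` gives `y/(1+xy²) ↦ y/((1+xy)²+xy²) ↦ y/(1+x(1+y)²)`; these are the images of `x`
and `y` under `𝒦_{(0,1),2} ∘ 𝒦_{(1,0)}`.
-/

open MvPolynomial

noncomputable section

theorem MvPolynomial.fractionRing_algHom_ext {σ R B : Type*} [CommRing R] [Semiring B]
    [Algebra R B] {f g : FractionRing (MvPolynomial σ R) →ₐ[R] B}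
    (h : ∀ i, f (algebraMap (MvPolynomial σ R) _ (X i)) =
      g (algebraMap (MvPolynomial σ R) _ (X i))) : f = g :=
  IsLocalization.algHom_ext (nonZeroDivisors _) (MvPolynomial.algHom_ext h)

theorem MvPolynomial.algebraMap_ne_zero_of_constantCoeff_ne_zero {σ R L : Type*} [CommRing R]
    [CommRing L] [Algebra (MvPolynomial σ R) L] [IsFractionRing (MvPolynomial σ R) L]
    {p : MvPolynomial σ R} (hp : constantCoeff p ≠ 0) : algebraMap _ L p ≠ 0 :=
  IsFractionRing.to_map_eq_zero_iff.not.mpr fun h => hp (by rw [h, map_zero])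

theorem one_add_xx_ne_zero : (1 : K) + xx ≠ 0 := by
  have h := algebraMap_ne_zero_of_constantCoeff_ne_zero (L := K)
    (p := (1 + X 0 : MvPolynomial (Fin 2) ℂ)) (by simp)
  rwa [map_add, map_one] at h

theorem one_add_xx_mul_yy_ne_zero : (1 : K) + xx * yy ≠ 0 := by
  have h := algebraMap_ne_zero_of_constantCoeff_ne_zero (L := K)
    (p := (1 + X 0 * X 1 : MvPolynomial (Fin 2) ℂ)) (by simp)
  rwa [map_add, map_one, map_mul] at h

theorem one_add_xx_mul_yy_sq_ne_zero : (1 : K) + xx * yy ^ 2 ≠ 0 := by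
  have h := algebraMap_ne_zero_of_constantCoeff_ne_zero (L := K)
    (p := (1 + X 0 * X 1 ^ 2 : MvPolynomial (Fin 2) ℂ)) (by simp)
  rwa [map_add, map_one, map_mul, map_pow] at h

theorem IsWallCrossing.apply_xx {d : ℤ} {γ : ℤ × ℤ} {Φ : K ≃ₐ[ℂ] K} (h : IsWallCrossing d γ Φ) :
    Φ xx = xx * (1 + zmon γ) ^ (d * γ.2) := by
  simpa [zmon, pairing] using h (1, 0)

theorem IsWallCrossing.apply_yy {d : ℤ} {γ : ℤ × ℤ} {Φ : K ≃ₐ[ℂ] K} (h : IsWallCrossing d γ Φ) :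
    Φ yy = yy * (1 + zmon γ) ^ (-(d * γ.1)) := by
  simpa [zmon, pairing] using h (0, 1)

theorem IsWallCrossing.apply_of_one_zero {Φ : K ≃ₐ[ℂ] K} (h : IsWallCrossing 1 (1, 0) Φ) :
    Φ xx = xx ∧ Φ yy = yy / (1 + xx) :=
  ⟨by simpa [zmon] using h.apply_xx, by simpa [zmon, div_eq_mul_inv] using h.apply_yy⟩

theorem IsWallCrossing.apply_of_zero_one {Φ : K ≃ₐ[ℂ] K} (h : IsWallCrossing 2 (0, 1) Φ) :
    Φ xx = xx * (1 + yy) ^ 2 ∧ Φ yy = yy :=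
  ⟨by simpa [zmon] using h.apply_xx, by simpa [zmon] using h.apply_yy⟩

theorem IsWallCrossing.apply_of_one_two {Φ : K ≃ₐ[ℂ] K} (h : IsWallCrossing 1 (1, 2) Φ) :
    Φ xx = xx * (1 + xx * yy ^ 2) ^ 2 ∧ Φ yy = yy / (1 + xx * yy ^ 2) :=
  ⟨by simpa [zmon] using h.apply_xx, by simpa [zmon, div_eq_mul_inv] using h.apply_yy⟩

theorem IsWallCrossing.apply_of_one_one {Φ : K ≃ₐ[ℂ] K} (h : IsWallCrossing 2 (1, 1) Φ) :
    Φ xx = xx * (1 + xx * yy) ^ 2 ∧ Φ yy = yy / (1 + xx * yy) ^ 2 :=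
  ⟨by simpa [zmon] using h.apply_xx, by simpa [zmon, div_eq_mul_inv] using h.apply_yy⟩

theorem B2_consistency_xx {K10 K01 K12 K11 : K ≃ₐ[ℂ] K}
    (h10 : IsWallCrossing 1 (1, 0) K10) (h01 : IsWallCrossing 2 (0, 1) K01)
    (h12 : IsWallCrossing 1 (1, 2) K12) (h11 : IsWallCrossing 2 (1, 1) K11) :
    K10 (K11 (K12 (K01 xx))) = K01 (K10 xx) := by
  obtain ⟨e1, e2⟩ := h10.apply_of_one_zero
  obtain ⟨a1, -⟩ := h01.apply_of_zero_one
  obtain ⟨b1, b2⟩ := h12.apply_of_one_two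
  obtain ⟨c1, c2⟩ := h11.apply_of_one_one
  have h1x := one_add_xx_ne_zero
  have h1xy := one_add_xx_mul_yy_ne_zero
  have h1xy2 := one_add_xx_mul_yy_sq_ne_zero
  calc K10 (K11 (K12 (K01 xx))) = K10 (K11 (K12 (xx * (1 + yy) ^ 2))) := by rw [a1]
    _ = K10 (K11 (xx * (1 + yy + xx * yy ^ 2) ^ 2)) := by
        congr 2
        simp only [map_mul, map_pow, map_add, map_one, b1, b2]
        field_simp
        ring
    _ = K10 (xx * (1 + yy + xx * yy) ^ 2) := by
        congr 1
        simp only [map_mul, map_pow, map_add, map_one, c1, c2]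
        field_simp
        ring
    _ = xx * (1 + yy) ^ 2 := by
        simp only [map_mul, map_pow, map_add, map_one, e1, e2]
        field_simp
        ring
    _ = K01 (K10 xx) := by rw [e1, a1]

theorem B2_consistency_yy {K10 K01 K12 K11 : K ≃ₐ[ℂ] K}
    (h10 : IsWallCrossing 1 (1, 0) K10) (h01 : IsWallCrossing 2 (0, 1) K01)
    (h12 : IsWallCrossing 1 (1, 2) K12) (h11 : IsWallCrossing 2 (1, 1) K11) :
    K10 (K11 (K12 (K01 yy))) = K01 (K10 yy) := by
  obtain ⟨e1, e2⟩ := h10.apply_of_one_zero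
  obtain ⟨a1, a2⟩ := h01.apply_of_zero_one
  obtain ⟨-, b2⟩ := h12.apply_of_one_two
  obtain ⟨c1, c2⟩ := h11.apply_of_one_one
  have h1x := one_add_xx_ne_zero
  have h1xy := one_add_xx_mul_yy_ne_zero
  have hc : K11 (1 + xx * yy ^ 2) = ((1 + xx * yy) ^ 2 + xx * yy ^ 2) / (1 + xx * yy) ^ 2 := by
    simp only [map_mul, map_pow, map_add, map_one, c1, c2]
    field_simp
  have he : K10 ((1 + xx * yy) ^ 2 + xx * yy ^ 2) = (1 + xx * (1 + yy) ^ 2) / (1 + xx) := by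
    simp only [map_mul, map_pow, map_add, map_one, e1, e2]
    field_simp
    ring
  calc K10 (K11 (K12 (K01 yy))) = K10 (K11 yy / K11 (1 + xx * yy ^ 2)) := by
        rw [a2, b2, map_div₀]
    _ = K10 (yy / ((1 + xx * yy) ^ 2 + xx * yy ^ 2)) := by
        rw [c2, hc, div_div_div_cancel_right₀ (pow_ne_zero 2 h1xy)]
    _ = yy / (1 + xx * (1 + yy) ^ 2) := by
        rw [map_div₀, e2, he, div_div_div_cancel_right₀ h1x]
    _ = K01 (K10 yy) := by rw [e2, map_div₀, map_add, map_one, a1, a2]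

/-- Consistency of the B₂ canonical scattering diagram: as automorphisms of `K = ℂ(x,y)`,
`𝒦_{(0,1),2} ∘ 𝒦_{(1,0),1} = 𝒦_{(1,0),1} ∘ 𝒦_{(1,1),2} ∘ 𝒦_{(1,2),1} ∘ 𝒦_{(0,1),2}`. -/
theorem B2_consistency
    (K10 K01 K12 K11 : K ≃ₐ[ℂ] K)
    (h10 : IsWallCrossing 1 (1, 0) K10) (h01 : IsWallCrossing 2 (0, 1) K01)
    (h12 : IsWallCrossing 1 (1, 2) K12) (h11 : IsWallCrossing 2 (1, 1) K11) :
    ∀ f : K, K01 (K10 f) = K10 (K11 (K12 (K01 f))) := by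
  have h : (K01 : K →ₐ[ℂ] K).comp K10 =
      (K10 : K →ₐ[ℂ] K).comp ((K11 : K →ₐ[ℂ] K).comp ((K12 : K →ₐ[ℂ] K).comp K01)) :=
    MvPolynomial.fractionRing_algHom_ext <| Fin.forall_fin_two.2
      ⟨by exact (B2_consistency_xx h10 h01 h12 h11).symm,
        by exact (B2_consistency_yy h10 h01 h12 h11).symm⟩
  exact fun f => DFunLike.congr_fun h f

end
end
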